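/- Covariance bound: for any probability measure μ and any square-integrable functions f, h, the covariance satisfies |μ(f²·h) − μ(f²)·μ(h)| ≤ c₀·(μ(f²))^{1/2}·(μ(|f − μf|²·(|h|² + μ(|h|²))))^{1/2} for some universal constant c₀ (one may take c₀ = 3), assuming all integrals involved are finite. -/

import Mathlib

/-!
With `m = μ f`, the covariance equals `μ[(f + m) · (f - m)(h - μ h)]`, because
`(f + m)(f - m) = f² - m²` and a constant is uncorrelated with `h`. Cauchy–Schwarz bounds this
by `‖f + m‖₂ · ‖(f - m)(h - μ h)‖₂`. Since `(μ g)² ≤ μ g²`, we have `‖f + m‖₂ ≤ 2 ‖f‖₂` and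
`(h - μ h)² ≤ 2 (h² + μ h²)`, which gives the constant `2√2 ≤ 3`.
-/

open MeasureTheory Real

section

variable {α : Type*} [MeasurableSpace α] {μ : Measure α}

theorem abs_integral_mul_le_sqrt_mul_sqrt {u v : α → ℝ} (hu : MemLp u 2 μ) (hv : MemLp v 2 μ) :
    |∫ x, u x * v x ∂μ| ≤ √(∫ x, u x ^ 2 ∂μ) * √(∫ x, v x ^ 2 ∂μ) := by
  have holder := integral_mul_norm_le_Lp_mul_Lq (μ := μ) (f := u) (g := v)
    HolderConjugate.two_two (by rwa [ENNReal.ofReal_ofNat]) (by rwa [ENNReal.ofReal_ofNat])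
  simp only [norm_eq_abs, rpow_two, sq_abs, ← sqrt_eq_rpow] at holder
  calc |∫ x, u x * v x ∂μ| ≤ ∫ x, |u x| * |v x| ∂μ := by
        simpa only [abs_mul] using abs_integral_le_integral_abs (f := fun x => u x * v x)
    _ ≤ _ := holder

variable [IsProbabilityMeasure μ]

theorem sq_integral_le_integral_sq {f : α → ℝ} (hf : MemLp f 2 μ) :
    (∫ x, f x ∂μ) ^ 2 ≤ ∫ x, f x ^ 2 ∂μ := by
  have hvar := ProbabilityTheory.variance_nonneg f μ
  rw [ProbabilityTheory.variance_eq_sub hf] at hvar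
  simpa only [Pi.pow_apply, sub_nonneg] using hvar

theorem integral_add_integral_sq_le {f : α → ℝ} (hf : MemLp f 2 μ) :
    ∫ x, (f x + ∫ y, f y ∂μ) ^ 2 ∂μ ≤ 4 * ∫ x, f x ^ 2 ∂μ := by
  set m := ∫ y, f y ∂μ
  calc ∫ x, (f x + m) ^ 2 ∂μ ≤ ∫ x, 2 * f x ^ 2 + 2 * m ^ 2 ∂μ := by
        refine integral_mono_of_nonneg (ae_of_all _ fun x => sq_nonneg _)
          ((hf.integrable_sq.const_mul 2).add (integrable_const _)) (ae_of_all _ fun x => ?_)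
        nlinarith [sq_nonneg (f x - m)]
    _ = 2 * ∫ x, f x ^ 2 ∂μ + 2 * m ^ 2 := by
        rw [integral_add (hf.integrable_sq.const_mul 2) (integrable_const _), integral_const_mul,
          integral_const, probReal_univ, one_smul]
    _ ≤ 4 * ∫ x, f x ^ 2 ∂μ := by linarith [sq_integral_le_integral_sq hf]

theorem sq_sub_integral_le {h : α → ℝ} (hh : MemLp h 2 μ) (x : α) :
    (h x - ∫ y, h y ∂μ) ^ 2 ≤ 2 * (h x ^ 2 + ∫ y, h y ^ 2 ∂μ) := by
  nlinarith [sq_nonneg (h x + ∫ y, h y ∂μ), sq_integral_le_integral_sq hh]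

theorem mul_sub_integral_sq_le {h : α → ℝ} (hh : MemLp h 2 μ) (a : ℝ) (x : α) :
    (a * (h x - ∫ y, h y ∂μ)) ^ 2 ≤ 2 * (a ^ 2 * (h x ^ 2 + ∫ y, h y ^ 2 ∂μ)) := by
  simpa only [mul_pow, mul_left_comm] using
    mul_le_mul_of_nonneg_left (sq_sub_integral_le hh x) (sq_nonneg a)

theorem memLp_mul_sub_integral {a h : α → ℝ} (ha : AEStronglyMeasurable a μ) (hh : MemLp h 2 μ)
    (hint : Integrable (fun x => a x ^ 2 * (h x ^ 2 + ∫ y, h y ^ 2 ∂μ)) μ) :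
    MemLp (fun x => a x * (h x - ∫ y, h y ∂μ)) 2 μ := by
  have hmeas : AEStronglyMeasurable (fun x => a x * (h x - ∫ y, h y ∂μ)) μ :=
    ha.mul (hh.1.sub aestronglyMeasurable_const)
  refine (memLp_two_iff_integrable_sq hmeas).2 <|
    (hint.const_mul 2).mono' (hmeas.pow 2) (ae_of_all _ fun x => ?_)
  simpa only [Pi.pow_apply, norm_pow, norm_eq_abs, sq_abs] using mul_sub_integral_sq_le hh (a x) x

theorem integral_mul_sub_integral_sq_le {a h : α → ℝ} (hh : MemLp h 2 μ)
    (hint : Integrable (fun x => a x ^ 2 * (h x ^ 2 + ∫ y, h y ^ 2 ∂μ)) μ) :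
    ∫ x, (a x * (h x - ∫ y, h y ∂μ)) ^ 2 ∂μ
      ≤ 2 * ∫ x, a x ^ 2 * (h x ^ 2 + ∫ y, h y ^ 2 ∂μ) ∂μ := by
  rw [← integral_const_mul]
  exact integral_mono_of_nonneg (ae_of_all _ fun x => sq_nonneg _) (hint.const_mul 2)
    (ae_of_all _ fun x => mul_sub_integral_sq_le hh (a x) x)

theorem integral_sq_mul_sub_eq {f h : α → ℝ} (hf : MemLp f 2 μ) (hh : Integrable h μ)
    (hf2h : Integrable (fun x => f x ^ 2 * h x) μ) (c : ℝ) :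
    (∫ x, f x ^ 2 * h x ∂μ) - (∫ x, f x ^ 2 ∂μ) * (∫ x, h x ∂μ)
      = ∫ x, (f x + c) * ((f x - c) * (h x - ∫ y, h y ∂μ)) ∂μ := by
  set Ih := ∫ y, h y ∂μ
  have hfsq := hf.integrable_sq
  have hf2h' : Integrable (fun x => f x ^ 2 * h x - Ih * f x ^ 2) μ :=
    hf2h.sub (hfsq.const_mul Ih)
  have hh' : Integrable (fun x => c ^ 2 * h x - c ^ 2 * Ih) μ :=
    (hh.const_mul _).sub (integrable_const _)
  have expand : (fun x => (f x + c) * ((f x - c) * (h x - Ih)))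
      = fun x => (f x ^ 2 * h x - Ih * f x ^ 2) - (c ^ 2 * h x - c ^ 2 * Ih) := by
    funext x; ring
  rw [expand, integral_sub hf2h' hh', integral_sub hf2h (hfsq.const_mul Ih),
    integral_sub (hh.const_mul _) (integrable_const _), integral_const_mul, integral_const_mul,
    integral_const, probReal_univ, one_smul]
  ring

end

/-- Covariance bound (Lemma 4.1 of the paper), with universal constant `c₀ = 3`. -/
theorem covariance_bound {α : Type*} [MeasurableSpace α]
    (μ : Measure α) [IsProbabilityMeasure μ] (f h : α → ℝ)
    (hf : MemLp f 2 μ) (hh : MemLp h 2 μ)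
    (hf2h : Integrable (fun x => (f x)^2 * h x) μ)
    (hint : Integrable
      (fun x => (f x - ∫ y, f y ∂μ)^2 * ((h x)^2 + ∫ y, (h y)^2 ∂μ)) μ) :
    |(∫ x, (f x)^2 * h x ∂μ) - (∫ x, (f x)^2 ∂μ) * (∫ x, h x ∂μ)|
      ≤ 3 * Real.sqrt (∫ x, (f x)^2 ∂μ) *
        Real.sqrt (∫ x, (f x - ∫ y, f y ∂μ)^2 * ((h x)^2 + ∫ y, (h y)^2 ∂μ) ∂μ) := by
  set m := ∫ y, f y ∂μ
  set A := ∫ x, (f x - m)^2 * ((h x)^2 + ∫ y, (h y)^2 ∂μ) ∂μ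
  have hv : MemLp (fun x => (f x - m) * (h x - ∫ y, h y ∂μ)) 2 μ :=
    memLp_mul_sub_integral (hf.1.sub aestronglyMeasurable_const) hh hint
  calc _ = |∫ x, (f x + m) * ((f x - m) * (h x - ∫ y, h y ∂μ)) ∂μ| := by
        rw [integral_sq_mul_sub_eq hf (hh.integrable one_le_two) hf2h m]
    _ ≤ √(∫ x, (f x + m) ^ 2 ∂μ) * √(∫ x, ((f x - m) * (h x - ∫ y, h y ∂μ)) ^ 2 ∂μ) :=
        abs_integral_mul_le_sqrt_mul_sqrt (hf.add (memLp_const m)) hv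
    _ ≤ √(4 * ∫ x, f x ^ 2 ∂μ) * √(2 * A) := by
        gcongr
        · exact integral_add_integral_sq_le hf
        · exact integral_mul_sub_integral_sq_le hh hint
    _ = 2 * √2 * (√(∫ x, f x ^ 2 ∂μ) * √A) := by
        rw [sqrt_mul zero_le_four, sqrt_mul zero_le_two, show (4 : ℝ) = 2 ^ 2 by norm_num,
          sqrt_sq zero_le_two]
        ring
    _ ≤ 3 * √(∫ x, f x ^ 2 ∂μ) * √A := by
        rw [mul_assoc 3]
        gcongr
        nlinarith [sq_sqrt zero_le_two, sqrt_nonneg 2]
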